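/- arXiv:2509.16239 — 2 statements merged into one kernel-verified Lean document; each statement's English description precedes it below -/
import Mathlib

section
/- The single-step reduction relation of the Gödel Mirror system is deterministic: if Step t t1 and Step t t2, then t1 = t2. -/
inductive MirrorSystem : Type where
  | base     : MirrorSystem
  | node     : MirrorSystem → MirrorSystem
  | self_ref : MirrorSystem
  | cap      : MirrorSystem → MirrorSystem
  | enter    : MirrorSystem → MirrorSystem
  | named    : String → MirrorSystem → MirrorSystem

open MirrorSystem

def is_paradox (t : MirrorSystem) : Prop := ∃ s, t = named s self_ref

inductive Step : MirrorSystem → MirrorSystem → Prop where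
  | paradox {t} : is_paradox t → Step t (cap t)
  | integrate {t} : Step (cap t) (enter t)
  | reentry {t} : ¬ is_paradox t → Step (enter t) (node t)
  | node_rule {t} : Step (node t) (node (node t))
  | named_rule {s t t'} : Step t t' → Step (named s t) (named s t')

theorem not_step_self_ref (u : MirrorSystem) : ¬ Step self_ref u := by
  rintro (⟨⟨_, ⟨⟩⟩⟩)

theorem is_paradox.step_eq_cap {t u : MirrorSystem} (hp : is_paradox t) (h : Step t u) :
    u = cap t := by
  obtain ⟨s, rfl⟩ := hp
  cases h with
  | paradox _ => rfl
  | named_rule h => exact absurd h (not_step_self_ref _)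

theorem step_deterministic {t t1 t2 : MirrorSystem}
    (h1 : Step t t1) (h2 : Step t t2) : t1 = t2 := by
  induction h1 generalizing t2 with
  | paradox hp => exact (hp.step_eq_cap h2).symm
  | named_rule h ih =>
    cases h2 with
    | paradox hp => exact hp.step_eq_cap (.named_rule h)
    | named_rule h' => rw [ih h']
  | integrate | reentry _ | node_rule =>
    cases h2 with
    | paradox hp => obtain ⟨_, ⟨⟩⟩ := hp
    | _ => rfl
end

section
/- Every infinite reduction sequence eventually consists only of node-headed terms: if f : ℕ → MirrorSystem satisfies Step (f n) (f (n+1)) for all n, and f 0 contains no named constructor anywhere, then there exists N such that for all n ≥ N, f n has head constructor node. -/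
open MirrorSystem

def noNamed : MirrorSystem → Prop
  | base => True
  | self_ref => True
  | node t => noNamed t
  | cap t => noNamed t
  | enter t => noNamed t
  | named _ _ => False

def isNodeHead : MirrorSystem → Prop
  | node _ => True
  | _ => False

namespace Step

theorem isNodeHead_of_isNodeHead {t u : MirrorSystem} (h : Step t u) (ht : isNodeHead t) :
    isNodeHead u := by
  cases h with
  | paradox hp => obtain ⟨s, rfl⟩ := hp; exact ht.elim
  | integrate | reentry _ | named_rule _ => exact ht.elim
  | node_rule => trivial

theorem eq_node_of_enter {t u : MirrorSystem} (h : Step (enter t) u) : u = node t := by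
  cases h with
  | paradox hp => obtain ⟨s, hs⟩ := hp; cases hs
  | reentry _ => rfl

/-- Without `named`, a `cap` head is turned into `enter` and then `node`, and an `enter` head
into `node`; either way two steps suffice. -/
theorem isNodeHead_of_step_step {t u v : MirrorSystem} (ht : noNamed t) (h₁ : Step t u)
    (h₂ : Step u v) : isNodeHead v := by
  cases h₁ with
  | paradox hp => obtain ⟨s, rfl⟩ := hp; exact ht.elim
  | named_rule _ => exact ht.elim
  | integrate => rw [eq_node_of_enter h₂]; trivial
  | reentry _ | node_rule => exact h₂.isNodeHead_of_isNodeHead trivial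

end Step

theorem isNodeHead_of_chain {f : ℕ → MirrorSystem} (hstep : ∀ n, Step (f n) (f (n + 1)))
    {N : ℕ} (hN : isNodeHead (f N)) {n : ℕ} (hn : N ≤ n) : isNodeHead (f n) := by
  induction n, hn using Nat.le_induction with
  | base => exact hN
  | succ m _ ih => exact (hstep m).isNodeHead_of_isNodeHead ih

theorem eventually_node_headed (f : ℕ → MirrorSystem)
    (hstep : ∀ n, Step (f n) (f (n + 1))) (h0 : noNamed (f 0)) :
    ∃ N, ∀ n ≥ N, isNodeHead (f n) :=
  have h2 : isNodeHead (f 2) := Step.isNodeHead_of_step_step h0 (hstep 0) (hstep 1)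
  ⟨2, fun _ hn => isNodeHead_of_chain hstep h2 hn⟩
end
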